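/- Fix λ ∈ ℂ. (i) A homogeneous linear map P : A_α → A_α of degree 0, which is necessarily of the form P(x) = r·x and P(y) = w·y for some r, w ∈ ℂ, is a Rota–Baxter operator of weight λ on A_α if and only if r² − 2rw − λw = 0 (in particular, if 2r + λ ≠ 0 this means w = r²/(2r+λ)). (ii) A nonzero homogeneous linear map P : A_α → A_α of degree c ≠ 0 is a Rota–Baxter operator of weight λ on A_α if and only if P(x) = s·y for some s ∈ ℂ and P(y) = 0. -/
import Mathlib


open scoped TensorProduct

/-- A skew-symmetric bicharacter of an abelian group `G` over a field `k`. -/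
structure Bicharacter (G : Type*) (k : Type*) [AddCommGroup G] [Field k] where
  ε : G → G → k
  ne_zero : ∀ a b : G, ε a b ≠ 0
  add_left : ∀ a b c : G, ε (a + b) c = ε a c * ε b c
  add_right : ∀ a b c : G, ε a (b + c) = ε a b * ε a c
  skew : ∀ a b : G, ε a b * ε b a = 1

/-- `(A, 𝒜, μ)` is a left-symmetric color algebra over `k` with respect to the
skew-symmetric bicharacter `ε`: the grading `𝒜` is an internal direct sum
decomposition of `A`, the multiplication `μ` respects the grading, and the
left-symmetric color identity holds on homogeneous elements. -/
structure IsLSCA {G k A : Type*} [AddCommGroup G] [DecidableEq G] [Field k]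
    [AddCommGroup A] [Module k A]
    (ε : Bicharacter G k) (𝒜 : G → Submodule k A) (μ : A →ₗ[k] A →ₗ[k] A) : Prop where
  internal : DirectSum.IsInternal 𝒜
  graded_mul : ∀ a b : G, ∀ x ∈ 𝒜 a, ∀ y ∈ 𝒜 b, μ x y ∈ 𝒜 (a + b)
  left_symm : ∀ a b c : G, ∀ x ∈ 𝒜 a, ∀ y ∈ 𝒜 b, ∀ z ∈ 𝒜 c,
    μ (μ x y) z - μ x (μ y z) = ε.ε a b • (μ (μ y x) z - μ y (μ x z))

/-- `P` is a Nijenhuis operator on the left-symmetric color algebra `A`, homogeneous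
of degree `c`:  `P(x)P(y) = ε(|P|+|x|,|P|) P(P(x)y) + P(x P(y)) − ε(|x|,|P|) P(P(xy))`
for all homogeneous `x, y`. -/
def IsNijenhuisOp {G k A : Type*} [AddCommGroup G] [Field k] [AddCommGroup A] [Module k A]
    (ε : Bicharacter G k) (𝒜 : G → Submodule k A) (μ : A →ₗ[k] A →ₗ[k] A)
    (c : G) (P : A →ₗ[k] A) : Prop :=
  (∀ a : G, ∀ x ∈ 𝒜 a, P x ∈ 𝒜 (a + c)) ∧
  ∀ a b : G, ∀ x ∈ 𝒜 a, ∀ y ∈ 𝒜 b,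
    μ (P x) (P y)
      = ε.ε (c + a) c • P (μ (P x) y) + P (μ x (P y)) - ε.ε a c • P (P (μ x y))

/-- `P` is a Rota-Baxter operator of weight `lam` on the left-symmetric color algebra
`A`, homogeneous of degree `c`:
`P(x)P(y) = ε(|P|+|x|,|P|) P(P(x)y) + P(x P(y)) + lam·P(xy)` for all homogeneous
`x, y`. -/
def IsRotaBaxterOp {G k A : Type*} [AddCommGroup G] [Field k] [AddCommGroup A] [Module k A]
    (ε : Bicharacter G k) (𝒜 : G → Submodule k A) (μ : A →ₗ[k] A →ₗ[k] A)
    (c : G) (lam : k) (P : A →ₗ[k] A) : Prop :=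
  (∀ a : G, ∀ x ∈ 𝒜 a, P x ∈ 𝒜 (a + c)) ∧
  ∀ a b : G, ∀ x ∈ 𝒜 a, ∀ y ∈ 𝒜 b,
    μ (P x) (P y)
      = ε.ε (c + a) c • P (μ (P x) y) + P (μ x (P y)) + lam • P (μ x y)

/-- Rota-Baxter operators of weight `lam` on the 2-dimensional proper
left-symmetric color algebra `A_α` over `ℂ`:
(i) a homogeneous linear map `P` of degree `0` — necessarily of the form `P(x) = r·x`,
`P(y) = w·y` — is a Rota-Baxter operator of weight `lam` iff `r² − 2rw − lam·w = 0`;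
(ii) a nonzero homogeneous linear map `P` of some degree `c ≠ 0` is a Rota-Baxter
operator of weight `lam` iff `P(x) = s·y` for some `s ∈ ℂ` and `P(y) = 0`. -/
theorem rotaBaxter_operators_on_Aalpha {G : Type*} [AddCommGroup G] [DecidableEq G]
    (a b : G) (hab : a + a = b) (hne : a ≠ b) (ha : a ≠ 0) (hb : b ≠ 0)
    (ε : Bicharacter G ℂ)
    {A : Type*} [AddCommGroup A] [Module ℂ A]
    (x y : A) (hind : LinearIndependent ℂ ![x, y])
    (hspan : Submodule.span ℂ {x, y} = ⊤)
    (𝒜 : G → Submodule ℂ A)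
    (h𝒜a : 𝒜 a = Submodule.span ℂ {x}) (h𝒜b : 𝒜 b = Submodule.span ℂ {y})
    (h𝒜 : ∀ g : G, g ≠ a → g ≠ b → 𝒜 g = ⊥)
    (α : ℂ) (hα : α ≠ 0)
    (μ : A →ₗ[ℂ] A →ₗ[ℂ] A)
    (hxx : μ x x = α • y) (hxy : μ x y = 0) (hyx : μ y x = 0) (hyy : μ y y = 0)
    (lam : ℂ) :
    (∀ P : A →ₗ[ℂ] A, (∀ g : G, ∀ u ∈ 𝒜 g, P u ∈ 𝒜 g) →
      (∃ r w : ℂ, P x = r • x ∧ P y = w • y) ∧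
      (∀ r w : ℂ, P x = r • x → P y = w • y →
        (IsRotaBaxterOp ε 𝒜 μ 0 lam P ↔ r ^ 2 - 2 * r * w - lam * w = 0))) ∧
    (∀ P : A →ₗ[ℂ] A, P ≠ 0 →
      ((∃ c : G, c ≠ 0 ∧ IsRotaBaxterOp ε 𝒜 μ c lam P) ↔
        ((∃ s : ℂ, P x = s • y) ∧ P y = 0))) := by
  classical
  have hεzero : ∀ g : G, ε.ε g 0 = 1 := by
    intro g
    have h := ε.add_right g 0 0
    rw [add_zero] at h
    exact (mul_left_cancel₀ (ε.ne_zero g 0) (by rw [mul_one]; exact h)).symm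
  have hpair := LinearIndependent.pair_iff.mp hind
  have hy0 : y ≠ 0 := by
    intro h
    have := (hpair 0 1 (by simp [h])).2
    norm_num at this
  have hysub : ∀ c1 c2 : ℂ, c1 • y = c2 • y → c1 = c2 := by
    intro c1 c2 h
    have h2 := hpair 0 (c1 - c2) (by rw [sub_smul, h]; simp)
    exact sub_eq_zero.mp h2.2
  have hxmem : x ∈ 𝒜 a := by rw [h𝒜a]; exact Submodule.mem_span_singleton_self x
  have hymem : y ∈ 𝒜 b := by rw [h𝒜b]; exact Submodule.mem_span_singleton_self y
  constructor
  · -- Part (i)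
    intro P hP
    have hPx : ∃ r : ℂ, P x = r • x := by
      have h := hP a x hxmem
      rw [h𝒜a, Submodule.mem_span_singleton] at h
      obtain ⟨r, hr⟩ := h
      exact ⟨r, hr.symm⟩
    have hPy : ∃ w : ℂ, P y = w • y := by
      have h := hP b y hymem
      rw [h𝒜b, Submodule.mem_span_singleton] at h
      obtain ⟨w, hw⟩ := h
      exact ⟨w, hw.symm⟩
    obtain ⟨r0, hr0⟩ := hPx
    obtain ⟨w0, hw0⟩ := hPy
    refine ⟨⟨r0, w0, hr0, hw0⟩, ?_⟩
    intro r w hr hw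
    constructor
    · rintro ⟨-, heq⟩
      have h := heq a a x hxmem x hxmem
      rw [hr, hεzero, one_smul] at h
      simp only [map_smul, LinearMap.map_smul, LinearMap.smul_apply, hxx, hxy, hyx, hyy,
        hr, hw, smul_smul] at h
      rw [← add_smul, ← add_smul] at h
      have hc := hysub _ _ h
      have h0 : α * (r ^ 2 - 2 * r * w - lam * w) = 0 := by linear_combination hc
      rcases mul_eq_zero.mp h0 with h' | h'
      · exact absurd h' hα
      · exact h'
    · intro hrw
      refine ⟨fun g u hu => by simpa using hP g u hu, ?_⟩
      intro g1 g2 u hu v hv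
      rcases eq_or_ne g1 a with h1a | h1a
      · rw [h1a, h𝒜a, Submodule.mem_span_singleton] at hu
        obtain ⟨s, rfl⟩ := hu
        rcases eq_or_ne g2 a with h2a | h2a
        · rw [h2a, h𝒜a, Submodule.mem_span_singleton] at hv
          obtain ⟨t, rfl⟩ := hv
          rw [hεzero, one_smul]
          simp only [map_smul, LinearMap.map_smul, LinearMap.smul_apply, hr, hw, hxx,
            smul_smul]
          rw [← add_smul, ← add_smul]
          congr 1
          linear_combination (s * t * α) * hrw
        · rcases eq_or_ne g2 b with h2b | h2b
          · rw [h2b, h𝒜b, Submodule.mem_span_singleton] at hv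
            obtain ⟨t, rfl⟩ := hv
            simp [hr, hw, hxx, hxy, hyx, hyy, smul_smul, map_smul]
          · rw [h𝒜 g2 h2a h2b, Submodule.mem_bot] at hv
            subst hv
            simp
      · rcases eq_or_ne g1 b with h1b | h1b
        · rw [h1b, h𝒜b, Submodule.mem_span_singleton] at hu
          obtain ⟨s, rfl⟩ := hu
          rcases eq_or_ne g2 a with h2a | h2a
          · rw [h2a, h𝒜a, Submodule.mem_span_singleton] at hv
            obtain ⟨t, rfl⟩ := hv
            simp [hr, hw, hxx, hxy, hyx, hyy, smul_smul, map_smul]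
          · rcases eq_or_ne g2 b with h2b | h2b
            · rw [h2b, h𝒜b, Submodule.mem_span_singleton] at hv
              obtain ⟨t, rfl⟩ := hv
              simp [hr, hw, hxx, hxy, hyx, hyy, smul_smul, map_smul]
            · rw [h𝒜 g2 h2a h2b, Submodule.mem_bot] at hv
              subst hv
              simp
        · rw [h𝒜 g1 h1a h1b, Submodule.mem_bot] at hu
          subst hu
          simp
  · -- Part (ii)
    intro P hPne
    constructor
    · rintro ⟨c, hc, hgrad, heq⟩
      have hPyzero : P y = 0 := by
        have h := hgrad b y hymem
        rcases eq_or_ne (b + c) a with hba | hba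
        · rw [hba, h𝒜a, Submodule.mem_span_singleton] at h
          obtain ⟨t, ht⟩ := h
          have h2 := heq b b y hymem y hymem
          rw [← ht] at h2
          simp only [map_smul, LinearMap.map_smul, LinearMap.smul_apply, hxx, hxy, hyx, hyy,
            smul_smul, smul_zero, map_zero, add_zero, zero_add] at h2
          have ht0 : t * t * α = 0 := by
            have := hysub _ 0 (by rw [h2]; simp)
            simpa using this
          have : t = 0 := by
            rcases mul_eq_zero.mp ht0 with h' | h'
            · rcases mul_eq_zero.mp h' with h'' | h'' <;> exact h''
            · exact absurd h' hα
          rw [← ht, this, zero_smul]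
        · have hbb : b + c ≠ b := by
            intro h'
            exact hc (by rwa [add_eq_left] at h')
          rw [h𝒜 _ hba hbb, Submodule.mem_bot] at h
          exact h
      refine ⟨?_, hPyzero⟩
      have h := hgrad a x hxmem
      rcases eq_or_ne (a + c) b with hacb | hacb
      · rw [hacb, h𝒜b, Submodule.mem_span_singleton] at h
        obtain ⟨s, hs⟩ := h
        exact ⟨s, hs.symm⟩
      · have haca : a + c ≠ a := by
          intro h'
          exact hc (by rwa [add_eq_left] at h')
        rw [h𝒜 _ haca hacb, Submodule.mem_bot] at h
        exact ⟨0, by rw [h, zero_smul]⟩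
    · rintro ⟨⟨s, hPx⟩, hPy⟩
      refine ⟨a, ha, ?_, ?_⟩
      · intro g u hu
        rcases eq_or_ne g a with h1 | h1
        · rw [h1, h𝒜a, Submodule.mem_span_singleton] at hu
          obtain ⟨t, rfl⟩ := hu
          rw [map_smul, hPx, h1, hab, h𝒜b]
          exact Submodule.smul_mem _ _ (Submodule.smul_mem _ _
            (Submodule.mem_span_singleton_self y))
        · rcases eq_or_ne g b with h2 | h2
          · rw [h2, h𝒜b, Submodule.mem_span_singleton] at hu
            obtain ⟨t, rfl⟩ := hu
            rw [map_smul, hPy, smul_zero]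
            exact Submodule.zero_mem _
          · rw [h𝒜 g h1 h2, Submodule.mem_bot] at hu
            subst hu
            rw [map_zero]
            exact Submodule.zero_mem _
      · intro g1 g2 u hu v hv
        rcases eq_or_ne g1 a with h1a | h1a
        · rw [h1a, h𝒜a, Submodule.mem_span_singleton] at hu
          obtain ⟨su, rfl⟩ := hu
          rcases eq_or_ne g2 a with h2a | h2a
          · rw [h2a, h𝒜a, Submodule.mem_span_singleton] at hv
            obtain ⟨t, rfl⟩ := hv
            simp [hPx, hPy, hxx, hxy, hyx, hyy, smul_smul, map_smul]
          · rcases eq_or_ne g2 b with h2b | h2b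
            · rw [h2b, h𝒜b, Submodule.mem_span_singleton] at hv
              obtain ⟨t, rfl⟩ := hv
              simp [hPx, hPy, hxx, hxy, hyx, hyy, smul_smul, map_smul]
            · rw [h𝒜 g2 h2a h2b, Submodule.mem_bot] at hv
              subst hv
              simp
        · rcases eq_or_ne g1 b with h1b | h1b
          · rw [h1b, h𝒜b, Submodule.mem_span_singleton] at hu
            obtain ⟨su, rfl⟩ := hu
            rcases eq_or_ne g2 a with h2a | h2a
            · rw [h2a, h𝒜a, Submodule.mem_span_singleton] at hv
              obtain ⟨t, rfl⟩ := hv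
              simp [hPx, hPy, hxx, hxy, hyx, hyy, smul_smul, map_smul]
            · rcases eq_or_ne g2 b with h2b | h2b
              · rw [h2b, h𝒜b, Submodule.mem_span_singleton] at hv
                obtain ⟨t, rfl⟩ := hv
                simp [hPx, hPy, hxx, hxy, hyx, hyy, smul_smul, map_smul]
              · rw [h𝒜 g2 h2a h2b, Submodule.mem_bot] at hv
                subst hv
                simp
          · rw [h𝒜 g1 h1a h1b, Submodule.mem_bot] at hu
            subst hu
            simp
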